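/- Let λ^{(t)} be the largest zero of G_t and μ^{(t)} the largest zero of F_t. Then μ^{(t−1)} < λ^{(t)} holds whenever k ≥ 5 and t ≥ 2, or k = 4 and 2 ≤ t ≤ 5, or k = 3 and 2 ≤ t ≤ 3; and μ^{(t−1)} > λ^{(t)} holds whenever k = 4 and t ≥ 6, or k = 3 and t ≥ 4. -/
import Mathlib


open Polynomial

/-- The adjacency matrix of a simple graph over `ℝ` is Hermitian. -/
theorem adjMatrix_isHermitian {V : Type*} [Fintype V] [DecidableEq V]
    (G : SimpleGraph V) [DecidableRel G.Adj] : (G.adjMatrix ℝ).IsHermitian := by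
  rw [Matrix.IsHermitian, Matrix.conjTranspose_eq_transpose_of_trivial]
  exact G.isSymm_adjMatrix

/-- The multiset of adjacency eigenvalues (with multiplicity) of a finite simple graph. -/
noncomputable def eigMultiset {V : Type*} [Fintype V] [DecidableEq V]
    (G : SimpleGraph V) [DecidableRel G.Adj] : Multiset ℝ :=
  Multiset.map (adjMatrix_isHermitian G).eigenvalues Finset.univ.val

/-- The second largest adjacency eigenvalue (with multiplicity) of a finite simple graph:
the second-to-last entry of the nondecreasing sorted list of eigenvalues. -/
noncomputable def secondEigenvalue {V : Type*} [Fintype V] [DecidableEq V]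
    (G : SimpleGraph V) [DecidableRel G.Adj] : ℝ :=
  ((eigMultiset G).sort (· ≤ ·)).getD (((eigMultiset G).sort (· ≤ ·)).length - 2) 0

/-- The largest adjacency eigenvalue (spectral radius) of a finite simple graph. -/
noncomputable def largestEigenvalue {V : Type*} [Fintype V] [DecidableEq V]
    (G : SimpleGraph V) [DecidableRel G.Adj] : ℝ :=
  ((eigMultiset G).sort (· ≤ ·)).getD (((eigMultiset G).sort (· ≤ ·)).length - 1) 0

/-- The orthogonal polynomials `F_i^{(k)}`. -/
noncomputable def Fpoly (k : ℕ) : ℕ → Polynomial ℝ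
  | 0 => 1
  | 1 => X
  | 2 => X ^ 2 - C (k : ℝ)
  | n + 3 => X * Fpoly k (n + 2) - C ((k : ℝ) - 1) * Fpoly k (n + 1)

/-- `G_i = Σ_{j=0}^i F_j`. -/
noncomputable def Gpoly (k : ℕ) (i : ℕ) : Polynomial ℝ :=
  ∑ j ∈ Finset.range (i + 1), Fpoly k j

/-- The tridiagonal matrix `T(k,t,c)`: superdiagonal `(k, k-1, …, k-1)`,
subdiagonal `(1, …, 1, c)`, diagonal chosen so that every row sums to `k`. -/
noncomputable def Tmat (k t : ℕ) (c : ℝ) : Matrix (Fin t) (Fin t) ℝ :=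
  Matrix.of fun i j =>
    if (j : ℕ) = (i : ℕ) + 1 then (if (i : ℕ) = 0 then (k : ℝ) else (k : ℝ) - 1)
    else if (i : ℕ) = (j : ℕ) + 1 then (if (i : ℕ) = t - 1 then c else 1)
    else if i = j then
      (k : ℝ) - (if (i : ℕ) + 1 < t then (if (i : ℕ) = 0 then (k : ℝ) else (k : ℝ) - 1) else 0)
        - (if 0 < (i : ℕ) then (if (i : ℕ) = t - 1 then c else 1) else 0)
    else 0

/-- `M(k,t,c) = 1 + Σ_{i=0}^{t-3} k (k-1)^i + k (k-1)^{t-2} / c`. -/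
noncomputable def Mbound (k t : ℕ) (c : ℝ) : ℝ :=
  1 + (∑ i ∈ Finset.range (t - 2), (k : ℝ) * ((k : ℝ) - 1) ^ i)
    + (k : ℝ) * ((k : ℝ) - 1) ^ (t - 2) / c

lemma Fpoly_monic_natDegree (k : ℕ) : ∀ i, (Fpoly k i).Monic ∧ (Fpoly k i).natDegree = i := by
  intro i
  induction i using Nat.strong_induction_on with
  | _ i ih =>
    match i with
    | 0 => exact ⟨monic_one, natDegree_one⟩
    | 1 => exact ⟨monic_X, natDegree_X⟩
    | 2 => exact ⟨monic_X_pow_sub_C _ two_ne_zero, natDegree_X_pow_sub_C⟩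
    | n + 3 =>
      obtain ⟨hm2, hd2⟩ := ih (n+2) (by omega)
      obtain ⟨hm1, hd1⟩ := ih (n+1) (by omega)
      have hmul : (X * Fpoly k (n+2)).Monic := monic_X.mul hm2
      have hdmul : (X * Fpoly k (n+2)).natDegree = n + 3 := by
        rw [natDegree_X_mul hm2.ne_zero, hd2]
      have hdlt : (C ((k:ℝ)-1) * Fpoly k (n+1)).degree < (X * Fpoly k (n+2)).degree := by
        apply lt_of_le_of_lt (degree_mul_le _ _)
        rw [degree_eq_natDegree hmul.ne_zero, hdmul]
        calc (C ((k:ℝ)-1)).degree + (Fpoly k (n+1)).degree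
            ≤ 0 + (n+1 : ℕ) := by
              exact add_le_add degree_C_le (degree_le_natDegree.trans (by rw [hd1]))
          _ < ((n+3 : ℕ) : WithBot ℕ) := by
              rw [zero_add]
              exact_mod_cast by omega
      constructor
      · show (X * Fpoly k (n+2) - C ((k:ℝ)-1) * Fpoly k (n+1)).Monic
        rw [sub_eq_add_neg]
        exact hmul.add_of_left (by rwa [degree_neg])
      · show (X * Fpoly k (n+2) - C ((k:ℝ)-1) * Fpoly k (n+1)).natDegree = n + 3
        rw [natDegree_sub_eq_left_of_natDegree_lt, hdmul]
        rw [hdmul]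
        calc (C ((k:ℝ)-1) * Fpoly k (n+1)).natDegree ≤ _ := natDegree_mul_le
          _ < n + 3 := by rw [natDegree_C, hd1]; omega

lemma Gpoly_succ (k i : ℕ) : Gpoly k (i+1) = Gpoly k i + Fpoly k (i+1) :=
  Finset.sum_range_succ _ _

lemma Fpoly_rec (k n : ℕ) :
    Fpoly k (n+3) = X * Fpoly k (n+2) - C ((k:ℝ)-1) * Fpoly k (n+1) := rfl

lemma Gpoly_rec (k : ℕ) : ∀ i, Gpoly k (i+2) = X * Gpoly k (i+1) - C ((k:ℝ)-1) * Gpoly k i := by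
  intro i
  induction i with
  | zero =>
    show Gpoly k 2 = _
    simp only [Gpoly, Finset.sum_range_succ, Finset.sum_range_zero, Fpoly, C_sub, C_1]
    ring
  | succ n ih =>
    rw [Gpoly_succ k (n+2),
      show Fpoly k (n+2+1) = X * Fpoly k (n+2) - C ((k:ℝ)-1) * Fpoly k (n+1) from rfl]
    linear_combination ih + (- (X : Polynomial ℝ)) * Gpoly_succ k (n+1)
      + C ((k:ℝ)-1) * Gpoly_succ k n

lemma key_identity (k : ℕ) :
    ∀ t, (X - C (k:ℝ)) * Gpoly k (t+1) = Fpoly k (t+2) - C ((k:ℝ)-1) * Fpoly k (t+1) := by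
  intro t
  induction t with
  | zero =>
    show (X - C (k:ℝ)) * Gpoly k 1 = _
    simp only [Gpoly, Finset.sum_range_succ, Finset.sum_range_zero, Fpoly, C_sub, C_1]
    ring
  | succ n ih =>
    rw [Gpoly_succ k (n+1), mul_add, ih,
      show Fpoly k (n+1+2) = X * Fpoly k (n+2) - C ((k:ℝ)-1) * Fpoly k (n+1) from rfl]
    simp only [C_sub, C_1]
    ring

lemma Gpoly_one (k : ℕ) : Gpoly k 1 = X + 1 := by
  simp [Gpoly, Finset.sum_range_succ, Fpoly]; ring

lemma Gpoly_monic_natDegree (k : ℕ) : ∀ i, (Gpoly k i).Monic ∧ (Gpoly k i).natDegree = i := by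
  intro i
  induction i using Nat.strong_induction_on with
  | _ i ih =>
    match i with
    | 0 => exact ⟨by simp [Gpoly, Fpoly, monic_one], by simp [Gpoly, Fpoly]⟩
    | 1 =>
      rw [Gpoly_one]
      refine ⟨monic_X.add_of_left ?_, ?_⟩
      · rw [degree_one, degree_X]; norm_num
      · rw [show (X + 1 : Polynomial ℝ) = X + C 1 by rw [C_1]]
        exact natDegree_X_add_C 1
    | n + 2 =>
      obtain ⟨hm2, hd2⟩ := ih (n+1) (by omega)
      obtain ⟨hm1, hd1⟩ := ih n (by omega)
      rw [Gpoly_rec]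
      have hmul : (X * Gpoly k (n+1)).Monic := monic_X.mul hm2
      have hdmul : (X * Gpoly k (n+1)).natDegree = n + 2 := by
        rw [natDegree_X_mul hm2.ne_zero, hd2]
      have hdlt : (C ((k:ℝ)-1) * Gpoly k n).degree < (X * Gpoly k (n+1)).degree := by
        apply lt_of_le_of_lt (degree_mul_le _ _)
        rw [degree_eq_natDegree hmul.ne_zero, hdmul]
        calc (C ((k:ℝ)-1)).degree + (Gpoly k n).degree
            ≤ 0 + (n : ℕ) := by
              exact add_le_add degree_C_le (degree_le_natDegree.trans (by rw [hd1]))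
          _ < ((n+2 : ℕ) : WithBot ℕ) := by
              rw [zero_add]; exact_mod_cast by omega
      constructor
      · rw [sub_eq_add_neg]
        exact hmul.add_of_left (by rwa [degree_neg])
      · rw [natDegree_sub_eq_left_of_natDegree_lt, hdmul]
        rw [hdmul]
        calc (C ((k:ℝ)-1) * Gpoly k n).natDegree ≤ _ := natDegree_mul_le
          _ < n + 2 := by rw [natDegree_C, hd1]; omega

lemma exists_root_gt {p : Polynomial ℝ} (hm : p.Monic) {a : ℝ} (ha : p.eval a < 0) :
    ∃ r, a < r ∧ p.IsRoot r := by
  have hd0 : p.natDegree ≠ 0 := by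
    intro h
    have : p = 1 := hm.natDegree_eq_zero.mp h
    rw [this] at ha; simp at ha; linarith
  have hdeg : 0 < p.degree := by
    rw [degree_eq_natDegree hm.ne_zero]
    exact_mod_cast Nat.pos_of_ne_zero hd0
  have htend := p.tendsto_atTop_of_leadingCoeff_nonneg hdeg (by rw [hm.leadingCoeff]; norm_num)
  obtain ⟨b, hb⟩ := ((htend.eventually_gt_atTop 0).and (Filter.eventually_gt_atTop a)).exists
  obtain ⟨hb0, hba⟩ := hb
  have hcont : ContinuousOn (fun x => p.eval x) (Set.Icc a b) :=
    (Polynomial.continuous p).continuousOn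
  have : (0:ℝ) ∈ Set.Ioo (p.eval a) (p.eval b) := ⟨ha, hb0⟩
  obtain ⟨r, hr, hr0⟩ := intermediate_value_Ioo hba.le hcont this
  exact ⟨r, hr.1, hr0⟩

lemma eval_pos_of_roots_lt {p : Polynomial ℝ} (hm : p.Monic) {a : ℝ}
    (h : ∀ x, p.IsRoot x → x < a) : 0 < p.eval a := by
  rcases lt_trichotomy (p.eval a) 0 with hlt | heq | hgt
  · obtain ⟨r, har, hr⟩ := exists_root_gt hm hlt
    exact absurd (h r hr) (by linarith)
  · exact absurd (h a heq) (lt_irrefl a)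
  · exact hgt

lemma exists_max_root {p : Polynomial ℝ} (hm : p.Monic) {a : ℝ} (ha : p.eval a < 0) :
    ∃ μ, p.IsRoot μ ∧ (∀ x, p.IsRoot x → x ≤ μ) ∧ a < μ := by
  obtain ⟨r, har, hr⟩ := exists_root_gt hm ha
  have hrm : r ∈ p.roots.toFinset := by
    rw [Multiset.mem_toFinset, mem_roots hm.ne_zero]
    exact hr
  have hne : p.roots.toFinset.Nonempty := ⟨r, hrm⟩
  refine ⟨p.roots.toFinset.max' hne, ?_, ?_, ?_⟩
  · have := p.roots.toFinset.max'_mem hne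
    rw [Multiset.mem_toFinset, mem_roots hm.ne_zero] at this
    exact this
  · intro x hx
    exact Finset.le_max' _ x (by rw [Multiset.mem_toFinset, mem_roots hm.ne_zero]; exact hx)
  · exact lt_of_lt_of_le har (Finset.le_max' _ r hrm)

lemma F_largest (k : ℕ) (hk : 3 ≤ k) :
    ∀ i, ∃ μ : ℝ, (Fpoly k (i+1)).IsRoot μ ∧ (∀ x, (Fpoly k (i+1)).IsRoot x → x ≤ μ) ∧
      0 < (Fpoly k i).eval μ := by
  have hk3 : (3:ℝ) ≤ (k:ℝ) := by exact_mod_cast hk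
  intro i
  induction i with
  | zero =>
    refine ⟨0, ?_, ?_, ?_⟩
    · simp [Fpoly, IsRoot]
    · intro x hx
      have : x = 0 := by simpa [Fpoly, IsRoot] using hx
      simp [this]
    · simp [Fpoly]
  | succ n ih =>
    obtain ⟨μ, hroot, hmax, hprev⟩ := ih
    have hneg : (Fpoly k (n+2)).eval μ < 0 := by
      match n with
      | 0 =>
        have hμ0 : μ = 0 := by simpa [Fpoly, IsRoot] using hroot
        have h2 : (Fpoly k 2).eval μ = -(k:ℝ) := by simp [Fpoly, hμ0]
        rw [h2]; linarith
      | m + 1 =>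
        have hrec : (Fpoly k (m+3)).eval μ =
            μ * (Fpoly k (m+2)).eval μ - ((k:ℝ)-1) * (Fpoly k (m+1)).eval μ := by
          rw [Fpoly_rec]; simp
        have h0 : (Fpoly k (m+2)).eval μ = 0 := hroot
        rw [hrec, h0]
        nlinarith
    obtain ⟨ν, hν, hνmax, hμν⟩ := exists_max_root (Fpoly_monic_natDegree k (n+2)).1 hneg
    refine ⟨ν, hν, hνmax, ?_⟩
    apply eval_pos_of_roots_lt (Fpoly_monic_natDegree k (n+1)).1
    intro x hx
    exact lt_of_le_of_lt (hmax x hx) hμν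

lemma G_largest (k : ℕ) (hk : 3 ≤ k) :
    ∀ i, ∃ μ : ℝ, (Gpoly k (i+1)).IsRoot μ ∧ (∀ x, (Gpoly k (i+1)).IsRoot x → x ≤ μ) ∧
      0 < (Gpoly k i).eval μ := by
  have hk3 : (3:ℝ) ≤ (k:ℝ) := by exact_mod_cast hk
  intro i
  induction i with
  | zero =>
    refine ⟨-1, ?_, ?_, ?_⟩
    · simp [Gpoly_one, IsRoot]
    · intro x hx
      have : x = -1 := by
        have := hx
        rw [IsRoot, Gpoly_one] at this
        simp at this
        linarith
      simp [this]
    · show 0 < (Gpoly k 0).eval (-1)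
      simp [Gpoly, Fpoly]
  | succ n ih =>
    obtain ⟨μ, hroot, hmax, hprev⟩ := ih
    have hneg : (Gpoly k (n+2)).eval μ < 0 := by
      have hrec : (Gpoly k (n+2)).eval μ =
          μ * (Gpoly k (n+1)).eval μ - ((k:ℝ)-1) * (Gpoly k n).eval μ := by
        rw [Gpoly_rec]; simp
      have h0 : (Gpoly k (n+1)).eval μ = 0 := hroot
      rw [hrec, h0]
      nlinarith
    obtain ⟨ν, hν, hνmax, hμν⟩ := exists_max_root (Gpoly_monic_natDegree k (n+2)).1 hneg
    refine ⟨ν, hν, hνmax, ?_⟩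
    apply eval_pos_of_roots_lt (Gpoly_monic_natDegree k (n+1)).1
    intro x hx
    exact lt_of_le_of_lt (hmax x hx) hμν

lemma G_maxroot_gt (k : ℕ) (hk : 3 ≤ k) (t₀ : ℕ) (ht₀ : 1 ≤ t₀) (c : ℝ)
    (hbase : (Gpoly k t₀).eval c < 0) :
    ∀ t, t₀ ≤ t → ∀ l, (Gpoly k t).IsRoot l → (∀ x, (Gpoly k t).IsRoot x → x ≤ l) → c < l := by
  intro t ht
  induction t, ht using Nat.le_induction with
  | base =>
    intro l _ hlmax
    obtain ⟨r, hcr, hr⟩ := exists_root_gt (Gpoly_monic_natDegree k t₀).1 hbase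
    exact lt_of_lt_of_le hcr (hlmax r hr)
  | succ n hn ih =>
    intro l _ hlmax
    obtain ⟨m, rfl⟩ : ∃ m, n = m + 1 := ⟨n - 1, by omega⟩
    obtain ⟨μ, hμroot, hμmax, hμprev⟩ := G_largest k hk m
    have hcμ : c < μ := ih μ hμroot hμmax
    have hneg : (Gpoly k (m+2)).eval μ < 0 := by
      have hrec : (Gpoly k (m+2)).eval μ =
          μ * (Gpoly k (m+1)).eval μ - ((k:ℝ)-1) * (Gpoly k m).eval μ := by
        rw [Gpoly_rec]; simp
      have h0 : (Gpoly k (m+1)).eval μ = 0 := hμroot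
      have hk3 : (3:ℝ) ≤ (k:ℝ) := by exact_mod_cast hk
      rw [hrec, h0]; nlinarith
    obtain ⟨r, hμr, hr⟩ := exists_root_gt (Gpoly_monic_natDegree k (m+2)).1 hneg
    exact lt_of_lt_of_le (lt_trans hcμ hμr) (hlmax r hr)

lemma F_growth (k : ℕ) (hk : 3 ≤ k) {x : ℝ} (hx : 2 * Real.sqrt ((k:ℝ)-1) ≤ x) :
    ∀ i, Real.sqrt ((k:ℝ)-1) * (Fpoly k i).eval x ≤ (Fpoly k (i+1)).eval x ∧
      0 < (Fpoly k (i+1)).eval x := by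
  have hk3 : (3:ℝ) ≤ (k:ℝ) := by exact_mod_cast hk
  set s := Real.sqrt ((k:ℝ)-1) with hs
  have hq2 : (2:ℝ) ≤ (k:ℝ)-1 := by linarith
  have hs2 : s^2 = (k:ℝ)-1 := Real.sq_sqrt (by linarith)
  have hs0 : 0 ≤ s := Real.sqrt_nonneg _
  have hs1 : 1 ≤ s := by nlinarith
  have hx0 : 0 < x := by nlinarith
  intro i
  induction i with
  | zero =>
    constructor
    · simp [Fpoly]; nlinarith
    · simp [Fpoly]; exact hx0
  | succ n ih =>
    match n, ih with
    | 0, _ =>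
      have h2 : (Fpoly k 2).eval x = x^2 - (k:ℝ) := by simp [Fpoly]
      have h1 : (Fpoly k 1).eval x = x := by simp [Fpoly]
      rw [h2, h1]
      constructor
      · nlinarith
      · nlinarith
    | m + 1, ih =>
      obtain ⟨ih1, ih2⟩ := ih
      have hrec : (Fpoly k (m+3)).eval x =
          x * (Fpoly k (m+2)).eval x - ((k:ℝ)-1) * (Fpoly k (m+1)).eval x := by
        rw [Fpoly_rec]; simp
      rw [hrec]
      constructor
      · nlinarith [mul_le_mul_of_nonneg_left ih1 hs0,
          mul_le_mul_of_nonneg_right hx ih2.le]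
      · nlinarith [mul_le_mul_of_nonneg_left ih1 hs0,
          mul_le_mul_of_nonneg_right hx ih2.le]

lemma F_root_lt (k : ℕ) (hk : 3 ≤ k) {i : ℕ} {x : ℝ}
    (hroot : (Fpoly k (i+1)).IsRoot x) : x < 2 * Real.sqrt ((k:ℝ)-1) := by
  by_contra h
  push_neg at h
  have := (F_growth k hk h i).2
  rw [IsRoot] at hroot
  linarith

lemma part1_main (k t : ℕ) (hk : 3 ≤ k) (ht : 2 ≤ t) (mu lam : ℝ)
    (hmu : (Fpoly k (t - 1)).IsRoot mu)
    (hmumax : ∀ x : ℝ, (Fpoly k (t - 1)).IsRoot x → x ≤ mu)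
    (hlammax : ∀ x : ℝ, (Gpoly k t).IsRoot x → x ≤ lam)
    (hmuq : mu < (k:ℝ) - 1) : mu < lam := by
  have hk3 : (3:ℝ) ≤ (k:ℝ) := by exact_mod_cast hk
  obtain ⟨u, rfl⟩ : ∃ u, t = u + 2 := ⟨t - 2, by omega⟩
  match u with
  | 0 =>
    have hmu0 : mu = 0 := by simpa [Fpoly, IsRoot] using hmu
    have hGneg : (Gpoly k 2).eval mu < 0 := by
      rw [hmu0]
      simp [Gpoly, Finset.sum_range_succ, Fpoly]
      linarith
    obtain ⟨r, hmur, hr⟩ := exists_root_gt (Gpoly_monic_natDegree k 2).1 hGneg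
    exact lt_of_lt_of_le hmur (hlammax r hr)
  | v + 1 =>
    -- t = v + 3
    have hidx : v + 1 + 2 - 1 = v + 2 := by omega
    rw [hidx] at hmu hmumax
    obtain ⟨μ, hμroot, hμmax, hFt2⟩ := F_largest k hk (v+1)
    have hmuμ : mu = μ := le_antisymm (hμmax mu hmu) (hmumax μ hμroot)
    have hB : 0 < (Fpoly k (v+1)).eval mu := by rw [hmuμ]; exact hFt2
    have h0 : (Fpoly k (v+2)).eval mu = 0 := hmu
    have hFt : (Fpoly k (v+3)).eval mu = -(((k:ℝ)-1) * (Fpoly k (v+1)).eval mu) := by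
      rw [Fpoly_rec]
      simp only [eval_sub, eval_mul, eval_X, eval_C, h0]
      ring
    have hFt1 : (Fpoly k (v+4)).eval mu = mu * (Fpoly k (v+3)).eval mu := by
      have hr := Fpoly_rec k (v+1)
      have e1 : v + 1 + 3 = v + 4 := by omega
      have e2 : v + 1 + 2 = v + 3 := by omega
      have e3 : v + 1 + 1 = v + 2 := by omega
      rw [e1, e2, e3] at hr
      rw [hr]
      simp only [eval_sub, eval_mul, eval_X, eval_C, h0]
      ring
    have hid := congrArg (eval mu) (key_identity k (v+2))
    have e4 : v + 2 + 1 = v + 3 := by omega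
    have e5 : v + 2 + 2 = v + 4 := by omega
    rw [e4, e5] at hid
    simp only [eval_mul, eval_sub, eval_X, eval_C] at hid
    -- hid : (mu - k) * G(v+3).eval mu = F(v+4).eval mu - (k-1) * F(v+3).eval mu
    have hGneg : (Gpoly k (v+3)).eval mu < 0 := by
      rw [hFt1, hFt] at hid
      nlinarith [mul_pos (mul_pos (show (0:ℝ) < (k:ℝ)-1 by linarith) hB)
        (sub_pos.2 hmuq)]
    obtain ⟨r, hmur, hr⟩ := exists_root_gt (Gpoly_monic_natDegree k (v+3)).1 hGneg
    exact lt_of_lt_of_le hmur (hlammax r hr)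

lemma part2_main (k t : ℕ) (hk : 3 ≤ k) (ht : 4 ≤ t) (mu lam : ℝ)
    (hmumax : ∀ x : ℝ, (Fpoly k (t - 1)).IsRoot x → x ≤ mu)
    (hlam : (Gpoly k t).IsRoot lam)
    (hlammax : ∀ x : ℝ, (Gpoly k t).IsRoot x → x ≤ lam)
    (hql : (k:ℝ) - 1 < lam) : lam < mu := by
  have hk3 : (3:ℝ) ≤ (k:ℝ) := by exact_mod_cast hk
  obtain ⟨s, rfl⟩ : ∃ s, t = s + 4 := ⟨t - 4, by omega⟩
  have hidx : s + 4 - 1 = s + 3 := by omega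
  rw [hidx] at hmumax
  obtain ⟨μ, hμroot, hμmax, hGt1⟩ := G_largest k hk (s+3)
  have e0 : s + 3 + 1 = s + 4 := by omega
  rw [e0] at hμroot hμmax
  have hlamμ : lam = μ := le_antisymm (hμmax lam hlam) (hlammax μ hμroot)
  have hGpos : 0 < (Gpoly k (s+3)).eval lam := by rw [hlamμ]; exact hGt1
  have hlam0 : (Gpoly k (s+4)).eval lam = 0 := hlam
  have hFneg : (Fpoly k (s+4)).eval lam < 0 := by
    have hsucc := congrArg (eval lam) (Gpoly_succ k (s+3))
    rw [e0] at hsucc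
    simp only [eval_add] at hsucc
    rw [hlam0] at hsucc
    linarith
  have hid := congrArg (eval lam) (key_identity k (s+3))
  have e1 : s + 3 + 1 = s + 4 := by omega
  have e2 : s + 3 + 2 = s + 5 := by omega
  rw [e1, e2] at hid
  simp only [eval_mul, eval_sub, eval_X, eval_C, hlam0, mul_zero] at hid
  -- hid : 0 = F(s+5).eval lam - (k-1) * F(s+4).eval lam
  have hr := Fpoly_rec k (s+2)
  have e3 : s + 2 + 3 = s + 5 := by omega
  have e4 : s + 2 + 2 = s + 4 := by omega
  have e5 : s + 2 + 1 = s + 3 := by omega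
  rw [e3, e4, e5] at hr
  have hrec := congrArg (eval lam) hr
  simp only [eval_sub, eval_mul, eval_X, eval_C] at hrec
  -- hrec : F(s+5).eval lam = lam * F(s+4).eval lam - (k-1) * F(s+3).eval lam
  have hF3neg : (Fpoly k (s+3)).eval lam < 0 := by
    nlinarith [mul_pos (sub_pos.2 hql) (neg_pos.2 hFneg)]
  obtain ⟨r, hlamr, hrr⟩ := exists_root_gt (Fpoly_monic_natDegree k (s+3)).1 hF3neg
  exact lt_of_lt_of_le hlamr (hmumax r hrr)

lemma mu_lt_k5 (k t : ℕ) (hk5 : 5 ≤ k) (ht : 2 ≤ t) {mu : ℝ}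
    (hmu : (Fpoly k (t-1)).IsRoot mu) : mu < (k:ℝ) - 1 := by
  have hk : 3 ≤ k := by omega
  obtain ⟨i, hi⟩ : ∃ i, t - 1 = i + 1 := ⟨t-2, by omega⟩
  rw [hi] at hmu
  have h1 := F_root_lt k hk hmu
  have hk5' : (5:ℝ) ≤ (k:ℝ) := by exact_mod_cast hk5
  have h4 : (4:ℝ) ≤ (k:ℝ)-1 := by linarith
  have h2 : 2 ≤ Real.sqrt ((k:ℝ)-1) := by
    have h := Real.sqrt_le_sqrt h4
    rw [show (4:ℝ) = 2^2 by norm_num, Real.sqrt_sq (by norm_num : (0:ℝ) ≤ 2)] at h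
    exact h
  have hs2 : (Real.sqrt ((k:ℝ)-1))^2 = (k:ℝ)-1 := Real.sq_sqrt (by linarith)
  nlinarith [Real.sqrt_nonneg ((k:ℝ)-1)]

lemma mu_lt_k4 (t : ℕ) (ht2 : 2 ≤ t) (ht5 : t ≤ 5) {mu : ℝ}
    (hmu : (Fpoly 4 (t-1)).IsRoot mu) : mu < 3 := by
  have h2 : (Fpoly 4 2).eval mu = mu^2 - 4 := by simp [Fpoly]
  have h3 : (Fpoly 4 3).eval mu = mu * (mu^2 - 4) - 3 * mu := by
    have h := Fpoly_rec 4 0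
    norm_num at h
    rw [h]
    simp [Fpoly, h2]

  have h4 : (Fpoly 4 4).eval mu = mu * (mu * (mu^2 - 4) - 3 * mu) - 3 * (mu^2 - 4) := by
    have h := Fpoly_rec 4 1
    norm_num at h
    rw [h]
    simp only [eval_sub, eval_mul, eval_X, eval_C, h2, h3]
  interval_cases t
  · have : mu = 0 := by simpa [Fpoly, IsRoot] using hmu
    rw [this]; norm_num
  · have : (Fpoly 4 2).eval mu = 0 := hmu
    rw [h2] at this
    nlinarith
  · have : (Fpoly 4 3).eval mu = 0 := hmu
    rw [h3] at this
    by_contra hcon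
    push_neg at hcon
    nlinarith
  · have : (Fpoly 4 4).eval mu = 0 := hmu
    rw [h4] at this
    by_contra hcon
    push_neg at hcon
    have h9 : (9:ℝ) ≤ mu^2 := by nlinarith
    nlinarith [mul_nonneg (sub_nonneg.2 h9) (show (0:ℝ) ≤ mu^2 - 1 by nlinarith)]

lemma mu_lt_k3 (t : ℕ) (ht2 : 2 ≤ t) (ht3 : t ≤ 3) {mu : ℝ}
    (hmu : (Fpoly 3 (t-1)).IsRoot mu) : mu < 2 := by
  interval_cases t
  · have : mu = 0 := by simpa [Fpoly, IsRoot] using hmu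
    rw [this]; norm_num
  · have : (Fpoly 3 2).eval mu = 0 := hmu
    have h2 : (Fpoly 3 2).eval mu = mu^2 - 3 := by simp [Fpoly]
    rw [h2] at this
    nlinarith

lemma Geval_k3 : (Gpoly 3 4).eval 2 < 0 := by
  have g0 : (Gpoly 3 0).eval 2 = 1 := by simp [Gpoly, Fpoly]
  have g1 : (Gpoly 3 1).eval 2 = 3 := by simp [Gpoly_one]; norm_num
  have step : ∀ i, (Gpoly 3 (i+2)).eval 2 =
      2 * (Gpoly 3 (i+1)).eval 2 - 2 * (Gpoly 3 i).eval 2 := by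
    intro i
    rw [Gpoly_rec]
    simp only [eval_sub, eval_mul, eval_X, eval_C]
    norm_num
  have g2 : (Gpoly 3 2).eval 2 = 4 := by have := step 0; norm_num [g0, g1] at this; linarith
  have g3 : (Gpoly 3 3).eval 2 = 2 := by have := step 1; norm_num [g1, g2] at this; linarith
  have g4 := step 2
  norm_num [g2, g3] at g4
  linarith

lemma Geval_k4 : (Gpoly 4 6).eval 3 < 0 := by
  have g0 : (Gpoly 4 0).eval 3 = 1 := by simp [Gpoly, Fpoly]
  have g1 : (Gpoly 4 1).eval 3 = 4 := by simp [Gpoly_one]; norm_num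
  have step : ∀ i, (Gpoly 4 (i+2)).eval 3 =
      3 * (Gpoly 4 (i+1)).eval 3 - 3 * (Gpoly 4 i).eval 3 := by
    intro i
    rw [Gpoly_rec]
    simp only [eval_sub, eval_mul, eval_X, eval_C]
    norm_num
  have g2 : (Gpoly 4 2).eval 3 = 9 := by have := step 0; norm_num [g0, g1] at this; linarith
  have g3 : (Gpoly 4 3).eval 3 = 15 := by have := step 1; norm_num [g1, g2] at this; linarith
  have g4 : (Gpoly 4 4).eval 3 = 18 := by have := step 2; norm_num [g2, g3] at this; linarith
  have g5 : (Gpoly 4 5).eval 3 = 9 := by have := step 3; norm_num [g3, g4] at this; linarith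
  have g6 := step 4
  norm_num [g4, g5] at g6
  linarith

theorem stmt8 (k t : ℕ) (mu lam : ℝ)
    (hmu : (Fpoly k (t - 1)).IsRoot mu)
    (hmumax : ∀ x : ℝ, (Fpoly k (t - 1)).IsRoot x → x ≤ mu)
    (hlam : (Gpoly k t).IsRoot lam)
    (hlammax : ∀ x : ℝ, (Gpoly k t).IsRoot x → x ≤ lam) :
    ((5 ≤ k ∧ 2 ≤ t) ∨ (k = 4 ∧ 2 ≤ t ∧ t ≤ 5) ∨ (k = 3 ∧ 2 ≤ t ∧ t ≤ 3) → mu < lam) ∧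
    ((k = 4 ∧ 6 ≤ t) ∨ (k = 3 ∧ 4 ≤ t) → lam < mu) := by
  constructor
  · rintro (⟨hk5, ht⟩ | ⟨rfl, ht2, ht5⟩ | ⟨rfl, ht2, ht3⟩)
    · exact part1_main k t (by omega) ht mu lam hmu hmumax hlammax (mu_lt_k5 k t hk5 ht hmu)
    · refine part1_main 4 t (by omega) ht2 mu lam hmu hmumax hlammax ?_
      have := mu_lt_k4 t ht2 ht5 hmu
      norm_num
      linarith
    · refine part1_main 3 t (by omega) ht2 mu lam hmu hmumax hlammax ?_
      have := mu_lt_k3 t ht2 ht3 hmu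
      norm_num
      linarith
  · rintro (⟨rfl, ht⟩ | ⟨rfl, ht⟩)
    · refine part2_main 4 t (by omega) (by omega) mu lam hmumax hlam hlammax ?_
      have := G_maxroot_gt 4 (by omega) 6 (by omega) 3 Geval_k4 t ht lam hlam hlammax
      norm_num
      linarith
    · refine part2_main 3 t (by omega) (by omega) mu lam hmumax hlam hlammax ?_
      have := G_maxroot_gt 3 (by omega) 4 (by omega) 2 Geval_k3 t (by omega) lam hlam hlammax
      norm_num
      linarith
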